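/- Let (ψ, ρ) be a classical solution of the thermohaline circulation model with no wind forcing. Then for every t ≥ 0, the function t ↦ ½ (N² ‖∇ψ(t)‖² + ‖ρ(t)‖²) is differentiable with derivative equal to − ν (N² ‖Δψ(t)‖² + (1/Pr) ‖∇ρ(t)‖²), where ‖∇ψ‖² = ∫_D (ψ_x² + ψ_z²), ‖ρ‖² = ∫_D ρ², ‖Δψ‖² = ∫_D (Δψ)², ‖∇ρ‖² = ∫_D (ρ_x² + ρ_z²). -/

import Mathlib

open MeasureTheory Real

/-- Partial derivative in the `x` direction. -/
noncomputable def px (u : ℝ × ℝ → ℝ) : ℝ × ℝ → ℝ := fun p => fderiv ℝ u p (1, 0)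

/-- Partial derivative in the `z` direction. -/
noncomputable def pz (u : ℝ × ℝ → ℝ) : ℝ × ℝ → ℝ := fun p => fderiv ℝ u p (0, 1)

/-- The Laplacian `Δu = u_xx + u_zz`. -/
noncomputable def lap (u : ℝ × ℝ → ℝ) : ℝ × ℝ → ℝ := fun p => px (px u) p + pz (pz u) p

/-- The Jacobian operator `J(a,b) = a_x b_z − a_z b_x`. -/
noncomputable def Jac (a b : ℝ × ℝ → ℝ) : ℝ × ℝ → ℝ :=
  fun p => px a p * pz b p - pz a p * px b p

/-- `u` is 1-periodic in both variables. -/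
def Per (u : ℝ × ℝ → ℝ) : Prop :=
  (∀ x z : ℝ, u (x + 1, z) = u (x, z)) ∧ (∀ x z : ℝ, u (x, z + 1) = u (x, z))

/-- The unit square `D = [0,1]²`. -/
def unitSq : Set (ℝ × ℝ) := Set.Icc 0 1 ×ˢ Set.Icc 0 1

/-! ### Auxiliary directional-derivative toolkit -/

/-- Directional derivative operator. -/
noncomputable def pdd {E : Type*} [NormedAddCommGroup E] [NormedSpace ℝ E] (v : E) (f : E → ℝ) :
    E → ℝ := fun q => fderiv ℝ f q v

lemma pdd_contDiff {E : Type*} [NormedAddCommGroup E] [NormedSpace ℝ E] {f : E → ℝ}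
    (hf : ContDiff ℝ (⊤ : ℕ∞) f) (v : E) : ContDiff ℝ (⊤ : ℕ∞) (pdd v f) :=
  (hf.fderiv_right (le_of_eq (by simp))).clm_apply contDiff_const

lemma pdd_comm {E : Type*} [NormedAddCommGroup E] [NormedSpace ℝ E] {f : E → ℝ}
    (hf : ContDiff ℝ (⊤ : ℕ∞) f) (v w : E) (q : E) :
    pdd v (pdd w f) q = pdd w (pdd v f) q := by
  have hdiff : Differentiable ℝ f := hf.differentiable (by simp)
  have h2 : DifferentiableAt ℝ (fderiv ℝ f) q :=
    ((hf.fderiv_right (m := (⊤ : ℕ∞)) (le_of_eq (by simp))).differentiable (by simp)) q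
  have key : ∀ a : E, fderiv ℝ (fun y => fderiv ℝ f y a) q
      = (ContinuousLinearMap.apply ℝ ℝ a).comp (fderiv ℝ (fderiv ℝ f) q) := by
    intro a
    exact (((ContinuousLinearMap.apply ℝ ℝ a).hasFDerivAt).comp q h2.hasFDerivAt).fderiv
  have hsymm := second_derivative_symmetric (f := f) (f' := fderiv ℝ f)
    (f'' := fderiv ℝ (fderiv ℝ f) q) (fun y => (hdiff y).hasFDerivAt) h2.hasFDerivAt v w
  show fderiv ℝ (fun y => fderiv ℝ f y w) q v = fderiv ℝ (fun y => fderiv ℝ f y v) q w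
  rw [key w, key v]
  simpa using hsymm

lemma px_eq_pdd (u : ℝ × ℝ → ℝ) : px u = pdd ((1:ℝ), (0:ℝ)) u := rfl
lemma pz_eq_pdd (u : ℝ × ℝ → ℝ) : pz u = pdd ((0:ℝ), (1:ℝ)) u := rfl

lemma contDiff_px {u : ℝ × ℝ → ℝ} (hu : ContDiff ℝ (⊤ : ℕ∞) u) : ContDiff ℝ (⊤ : ℕ∞) (px u) :=
  pdd_contDiff hu _
lemma contDiff_pz {u : ℝ × ℝ → ℝ} (hu : ContDiff ℝ (⊤ : ℕ∞) u) : ContDiff ℝ (⊤ : ℕ∞) (pz u) :=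
  pdd_contDiff hu _
lemma contDiff_lap {u : ℝ × ℝ → ℝ} (hu : ContDiff ℝ (⊤ : ℕ∞) u) : ContDiff ℝ (⊤ : ℕ∞) (lap u) := by
  have := (contDiff_px (contDiff_px hu)).add (contDiff_pz (contDiff_pz hu))
  exact this

lemma clairaut {u : ℝ × ℝ → ℝ} (hu : ContDiff ℝ (⊤ : ℕ∞) u) (p : ℝ × ℝ) :
    px (pz u) p = pz (px u) p := by
  rw [px_eq_pdd, pz_eq_pdd (px u), px_eq_pdd u, pz_eq_pdd u]
  exact pdd_comm hu _ _ p

/-! ### Bridges between joint and sliced derivatives -/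

lemma bridge_fderiv {F : ℝ × (ℝ × ℝ) → ℝ} (hF : Differentiable ℝ F) (s : ℝ) (p : ℝ × ℝ)
    (v : ℝ × ℝ) : fderiv ℝ (fun p' => F (s, p')) p v = fderiv ℝ F (s, p) (0, v) := by
  have h : HasFDerivAt (fun p' : ℝ × ℝ => (s, p'))
      ((0 : (ℝ × ℝ) →L[ℝ] ℝ).prod (ContinuousLinearMap.id ℝ (ℝ × ℝ))) p :=
    (hasFDerivAt_const s p).prodMk (hasFDerivAt_id p)
  have := ((hF (s, p)).hasFDerivAt.comp p h).fderiv
  rw [show (fun p' => F (s, p')) = (F ∘ fun p' : ℝ × ℝ => (s, p')) from rfl, this]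
  simp

lemma bridge_px {F : ℝ × (ℝ × ℝ) → ℝ} (hF : Differentiable ℝ F) (s : ℝ) (p : ℝ × ℝ) :
    px (fun p' => F (s, p')) p = pdd ((0:ℝ), ((1:ℝ), (0:ℝ))) F (s, p) :=
  bridge_fderiv hF s p (1, 0)

lemma bridge_pz {F : ℝ × (ℝ × ℝ) → ℝ} (hF : Differentiable ℝ F) (s : ℝ) (p : ℝ × ℝ) :
    pz (fun p' => F (s, p')) p = pdd ((0:ℝ), ((0:ℝ), (1:ℝ))) F (s, p) :=
  bridge_fderiv hF s p (0, 1)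

lemma bridge_t {F : ℝ × (ℝ × ℝ) → ℝ} (hF : Differentiable ℝ F) (t : ℝ) (p : ℝ × ℝ) :
    HasDerivAt (fun s => F (s, p)) (pdd ((1:ℝ), ((0:ℝ), (0:ℝ))) F (t, p)) t := by
  have h : HasFDerivAt (fun s : ℝ => (s, p))
      ((ContinuousLinearMap.id ℝ ℝ).prod (0 : ℝ →L[ℝ] (ℝ × ℝ))) t :=
    (hasFDerivAt_id t).prodMk (hasFDerivAt_const p t)
  have := ((hF (t, p)).hasFDerivAt.comp t h).hasDerivAt
  exact this

/-! ### Slice derivatives on `ℝ²`, periodicity, product rule -/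

lemma hasDerivAt_slice_x {u : ℝ × ℝ → ℝ} {x z : ℝ} (hu : DifferentiableAt ℝ u (x, z)) :
    HasDerivAt (fun x' => u (x', z)) (px u (x, z)) x := by
  have h : HasFDerivAt (fun x' : ℝ => (x', z))
      ((ContinuousLinearMap.id ℝ ℝ).prod (0 : ℝ →L[ℝ] ℝ)) x :=
    (hasFDerivAt_id x).prodMk (hasFDerivAt_const z x)
  have := (hu.hasFDerivAt.comp x h).hasDerivAt
  simpa [px, Function.comp_def] using this

lemma hasDerivAt_slice_z {u : ℝ × ℝ → ℝ} {x z : ℝ} (hu : DifferentiableAt ℝ u (x, z)) :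
    HasDerivAt (fun z' => u (x, z')) (pz u (x, z)) z := by
  have h : HasFDerivAt (fun z' : ℝ => (x, z'))
      ((0 : ℝ →L[ℝ] ℝ).prod (ContinuousLinearMap.id ℝ ℝ)) z :=
    (hasFDerivAt_const x z).prodMk (hasFDerivAt_id z)
  have := (hu.hasFDerivAt.comp z h).hasDerivAt
  simpa [pz, Function.comp_def] using this

lemma per_shift {u : ℝ × ℝ → ℝ} (hu : Differentiable ℝ u) (c p : ℝ × ℝ)
    (hshift : ∀ q, u (q + c) = u q) (v : ℝ × ℝ) :
    fderiv ℝ u p v = fderiv ℝ u (p + c) v := by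
  have h1 : HasFDerivAt (fun q : ℝ × ℝ => q + c) (ContinuousLinearMap.id ℝ (ℝ × ℝ)) p :=
    (hasFDerivAt_id p).add_const c
  have h2 : HasFDerivAt (fun q => u (q + c)) ((fderiv ℝ u (p + c)).comp
      (ContinuousLinearMap.id ℝ (ℝ × ℝ))) p := (hu (p + c)).hasFDerivAt.comp p h1
  have h3 : HasFDerivAt u ((fderiv ℝ u (p + c)).comp (ContinuousLinearMap.id ℝ (ℝ × ℝ))) p := by
    simpa only [funext hshift] using h2
  rw [h3.fderiv]; simp

lemma Per.px' {u : ℝ × ℝ → ℝ} (hp : Per u) (hu : Differentiable ℝ u) : Per (px u) := by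
  have h1 : ∀ q : ℝ × ℝ, u (q + (1, 0)) = u q := by
    rintro ⟨x, z⟩; simpa using hp.1 x z
  have h2 : ∀ q : ℝ × ℝ, u (q + (0, 1)) = u q := by
    rintro ⟨x, z⟩; simpa using hp.2 x z
  constructor
  · intro x z
    have := per_shift hu (1, 0) (x, z) h1 (1, 0)
    simpa [px, Prod.ext_iff] using this.symm
  · intro x z
    have := per_shift hu (0, 1) (x, z) h2 (1, 0)
    simpa [px, Prod.ext_iff] using this.symm

lemma Per.pz' {u : ℝ × ℝ → ℝ} (hp : Per u) (hu : Differentiable ℝ u) : Per (pz u) := by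
  have h1 : ∀ q : ℝ × ℝ, u (q + (1, 0)) = u q := by
    rintro ⟨x, z⟩; simpa using hp.1 x z
  have h2 : ∀ q : ℝ × ℝ, u (q + (0, 1)) = u q := by
    rintro ⟨x, z⟩; simpa using hp.2 x z
  constructor
  · intro x z
    have := per_shift hu (1, 0) (x, z) h1 (0, 1)
    simpa [pz, Prod.ext_iff] using this.symm
  · intro x z
    have := per_shift hu (0, 1) (x, z) h2 (0, 1)
    simpa [pz, Prod.ext_iff] using this.symm

lemma Per.lap' {u : ℝ × ℝ → ℝ} (hp : Per u) (hu : ContDiff ℝ (⊤ : ℕ∞) u) : Per (lap u) := by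
  have hx := (hp.px' (hu.differentiable (by simp))).px' ((contDiff_px hu).differentiable (by simp))
  have hz := (hp.pz' (hu.differentiable (by simp))).pz' ((contDiff_pz hu).differentiable (by simp))
  exact ⟨fun x z => by simp only [lap, hx.1 x z, hz.1 x z],
    fun x z => by simp only [lap, hx.2 x z, hz.2 x z]⟩

lemma px_mul {u v : ℝ × ℝ → ℝ} (hu : Differentiable ℝ u) (hv : Differentiable ℝ v) (p : ℝ × ℝ) :
    px (fun q => u q * v q) p = px u p * v p + u p * px v p := by
  simp only [px, fderiv_fun_mul (hu p) (hv p)]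
  simp [mul_comm]; ring

lemma pz_mul {u v : ℝ × ℝ → ℝ} (hu : Differentiable ℝ u) (hv : Differentiable ℝ v) (p : ℝ × ℝ) :
    pz (fun q => u q * v q) p = pz u p * v p + u p * pz v p := by
  simp only [pz, fderiv_fun_mul (hu p) (hv p)]
  simp [mul_comm]; ring

/-! ### Integration over the unit square -/

lemma isCompact_unitSq : IsCompact unitSq := isCompact_Icc.prod isCompact_Icc

lemma integrableOn_unitSq {f : ℝ × ℝ → ℝ} (hf : Continuous f) : IntegrableOn f unitSq :=
  hf.continuousOn.integrableOn_compact isCompact_unitSq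

lemma integral_unitSq_eq {f : ℝ × ℝ → ℝ} (hf : Continuous f) :
    (∫ p in unitSq, f p) = ∫ x in Set.Icc (0:ℝ) 1, ∫ z in Set.Icc (0:ℝ) 1, f (x, z) := by
  have h : IntegrableOn f (Set.Icc (0:ℝ) 1 ×ˢ Set.Icc (0:ℝ) 1)
      ((volume : Measure ℝ).prod volume) := by
    rw [← Measure.volume_eq_prod]; exact integrableOn_unitSq hf
  have := MeasureTheory.setIntegral_prod f h
  rw [unitSq, Measure.volume_eq_prod]
  exact this

lemma integral_unitSq_eq' {f : ℝ × ℝ → ℝ} (hf : Continuous f) :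
    (∫ p in unitSq, f p) = ∫ z in Set.Icc (0:ℝ) 1, ∫ x in Set.Icc (0:ℝ) 1, f (x, z) := by
  have hint : IntegrableOn f (Set.Icc (0:ℝ) 1 ×ˢ Set.Icc (0:ℝ) 1)
      ((volume : Measure ℝ).prod volume) := by
    rw [← Measure.volume_eq_prod]; exact integrableOn_unitSq hf
  have h1 : (∫ p in unitSq, f p)
      = ∫ p, f p ∂(((volume : Measure ℝ).restrict (Set.Icc 0 1)).prod
          ((volume : Measure ℝ).restrict (Set.Icc 0 1))) := by
    rw [unitSq, Measure.volume_eq_prod, MeasureTheory.Measure.prod_restrict]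
  rw [h1, ← MeasureTheory.integral_prod_swap]
  have hint1 : Integrable f
      ((((volume : Measure ℝ).restrict (Set.Icc 0 1))).prod
        (((volume : Measure ℝ).restrict (Set.Icc 0 1)))) := by
    rw [MeasureTheory.Measure.prod_restrict]; exact hint
  have hint2 := hint1.swap
  have := MeasureTheory.integral_prod _ hint2
  simp only [Function.comp] at this
  rw [this]; rfl

lemma integral_Icc_deriv_zero {f f' : ℝ → ℝ} (h : ∀ x, HasDerivAt f (f' x) x)
    (hc : Continuous f') (hper : f 1 = f 0) : ∫ x in Set.Icc (0:ℝ) 1, f' x = 0 := by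
  rw [MeasureTheory.integral_Icc_eq_integral_Ioc,
    ← intervalIntegral.integral_of_le (zero_le_one' ℝ),
    intervalIntegral.integral_eq_sub_of_hasDerivAt (fun x _ => h x) (hc.intervalIntegrable 0 1),
    hper, sub_self]

/-- Integration by parts in `x` : the integral of `∂ₓ(uv)` vanishes. -/
lemma ibp_sum_x {u v : ℝ × ℝ → ℝ} (hu : ContDiff ℝ (⊤ : ℕ∞) u) (hv : ContDiff ℝ (⊤ : ℕ∞) v)
    (hpu : Per u) (hpv : Per v) :
    ∫ p in unitSq, (px u p * v p + u p * px v p) = 0 := by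
  have hcont : Continuous fun p => px u p * v p + u p * px v p := by
    exact (((contDiff_px hu).continuous.mul hv.continuous).add
      (hu.continuous.mul (contDiff_px hv).continuous))
  rw [integral_unitSq_eq' hcont]
  have hin : ∀ z : ℝ, (∫ x in Set.Icc (0:ℝ) 1,
      (px u (x, z) * v (x, z) + u (x, z) * px v (x, z))) = 0 := by
    intro z
    apply integral_Icc_deriv_zero (f := fun x => u (x, z) * v (x, z))
    · intro x
      exact (hasDerivAt_slice_x (hu.differentiable (by simp)).differentiableAt).mul
        (hasDerivAt_slice_x (hv.differentiable (by simp)).differentiableAt)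
    · exact hcont.comp (continuous_id.prodMk continuous_const)
    · have h1 := hpu.1 0 z
      have h2 := hpv.1 0 z
      norm_num at h1 h2
      rw [h1, h2]
  simp only [hin, integral_zero]

/-- Integration by parts in `z`. -/
lemma ibp_sum_z {u v : ℝ × ℝ → ℝ} (hu : ContDiff ℝ (⊤ : ℕ∞) u) (hv : ContDiff ℝ (⊤ : ℕ∞) v)
    (hpu : Per u) (hpv : Per v) :
    ∫ p in unitSq, (pz u p * v p + u p * pz v p) = 0 := by
  have hcont : Continuous fun p => pz u p * v p + u p * pz v p := by
    exact (((contDiff_pz hu).continuous.mul hv.continuous).add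
      (hu.continuous.mul (contDiff_pz hv).continuous))
  rw [integral_unitSq_eq hcont]
  have hin : ∀ x : ℝ, (∫ z in Set.Icc (0:ℝ) 1,
      (pz u (x, z) * v (x, z) + u (x, z) * pz v (x, z))) = 0 := by
    intro x
    apply integral_Icc_deriv_zero (f := fun z => u (x, z) * v (x, z))
    · intro z
      exact (hasDerivAt_slice_z (hu.differentiable (by simp)).differentiableAt).mul
        (hasDerivAt_slice_z (hv.differentiable (by simp)).differentiableAt)
    · exact hcont.comp (continuous_const.prodMk continuous_id)
    · have h1 := hpu.2 x 0
      have h2 := hpv.2 x 0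
      norm_num at h1 h2
      rw [h1, h2]
  simp only [hin, integral_zero]

lemma ibp_x {u v : ℝ × ℝ → ℝ} (hu : ContDiff ℝ (⊤ : ℕ∞) u) (hv : ContDiff ℝ (⊤ : ℕ∞) v)
    (hpu : Per u) (hpv : Per v) :
    ∫ p in unitSq, px u p * v p = -∫ p in unitSq, u p * px v p := by
  have h1 := ibp_sum_x hu hv hpu hpv
  rw [MeasureTheory.integral_add (f := fun p => px u p * v p) (g := fun p => u p * px v p)
    (integrableOn_unitSq ((contDiff_px hu).continuous.mul hv.continuous))
    (integrableOn_unitSq (hu.continuous.mul (contDiff_px hv).continuous))] at h1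
  linarith

lemma ibp_z {u v : ℝ × ℝ → ℝ} (hu : ContDiff ℝ (⊤ : ℕ∞) u) (hv : ContDiff ℝ (⊤ : ℕ∞) v)
    (hpu : Per u) (hpv : Per v) :
    ∫ p in unitSq, pz u p * v p = -∫ p in unitSq, u p * pz v p := by
  have h1 := ibp_sum_z hu hv hpu hpv
  rw [MeasureTheory.integral_add (f := fun p => pz u p * v p) (g := fun p => u p * pz v p)
    (integrableOn_unitSq ((contDiff_pz hu).continuous.mul hv.continuous))
    (integrableOn_unitSq (hu.continuous.mul (contDiff_pz hv).continuous))] at h1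
  linarith

/-! ### Derived integral identities -/

lemma Per.mul {u v : ℝ × ℝ → ℝ} (hu : Per u) (hv : Per v) : Per (fun q => u q * v q) :=
  ⟨fun x z => by show u (x+1, z) * v (x+1, z) = u (x, z) * v (x, z); rw [hu.1, hv.1],
   fun x z => by show u (x, z+1) * v (x, z+1) = u (x, z) * v (x, z); rw [hu.2, hv.2]⟩

/-- `∫ ∇u·∇v = -∫ u Δv`. -/
lemma L_grad {u v : ℝ × ℝ → ℝ} (hu : ContDiff ℝ (⊤ : ℕ∞) u) (hv : ContDiff ℝ (⊤ : ℕ∞) v)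
    (hpu : Per u) (hpv : Per v) :
    ∫ p in unitSq, (px u p * px v p + pz u p * pz v p)
      = -∫ p in unitSq, u p * lap v p := by
  have hdu := hu.differentiable (by simp)
  have hdv := hv.differentiable (by simp)
  have h1 := ibp_x hu (contDiff_px hv) hpu (hpv.px' hdv)
  have h2 := ibp_z hu (contDiff_pz hv) hpu (hpv.pz' hdv)
  have hi1 : IntegrableOn (fun p => px u p * px v p) unitSq :=
    integrableOn_unitSq ((contDiff_px hu).continuous.mul (contDiff_px hv).continuous)
  have hi2 : IntegrableOn (fun p => pz u p * pz v p) unitSq :=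
    integrableOn_unitSq ((contDiff_pz hu).continuous.mul (contDiff_pz hv).continuous)
  rw [MeasureTheory.integral_add hi1 hi2, h1, h2]
  have hi3 : IntegrableOn (fun p => u p * px (px v) p) unitSq :=
    integrableOn_unitSq (hu.continuous.mul (contDiff_px (contDiff_px hv)).continuous)
  have hi4 : IntegrableOn (fun p => u p * pz (pz v) p) unitSq :=
    integrableOn_unitSq (hu.continuous.mul (contDiff_pz (contDiff_pz hv)).continuous)
  have : (fun p => u p * lap v p)
      = fun p => u p * px (px v) p + u p * pz (pz v) p := by
    funext p; simp only [lap]; ring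
  rw [this, MeasureTheory.integral_add hi3 hi4]
  ring

/-- `∫ u Δv = ∫ Δu v`. -/
lemma L_selfadj {u v : ℝ × ℝ → ℝ} (hu : ContDiff ℝ (⊤ : ℕ∞) u) (hv : ContDiff ℝ (⊤ : ℕ∞) v)
    (hpu : Per u) (hpv : Per v) :
    ∫ p in unitSq, u p * lap v p = ∫ p in unitSq, lap u p * v p := by
  have h1 := L_grad hu hv hpu hpv
  have h2 := L_grad hv hu hpv hpu
  have : (fun p => px v p * px u p + pz v p * pz u p)
      = fun p => px u p * px v p + pz u p * pz v p := by funext p; ring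
  rw [this] at h2
  have h3 : (∫ p in unitSq, v p * lap u p) = ∫ p in unitSq, lap u p * v p := by
    congr 1; funext p; ring
  rw [h1] at h2
  rw [← h3]; linarith

/-- `∫ u J(a, u) = 0`. -/
lemma L_J1 {a u : ℝ × ℝ → ℝ} (ha : ContDiff ℝ (⊤ : ℕ∞) a) (hu : ContDiff ℝ (⊤ : ℕ∞) u)
    (hpa : Per a) (hpu : Per u) :
    ∫ p in unitSq, u p * Jac a u p = 0 := by
  have hdu := hu.differentiable (by simp)
  have hm1 : ContDiff ℝ (⊤ : ℕ∞) (fun q => u q * pz u q) := hu.mul (contDiff_pz hu)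
  have hm2 : ContDiff ℝ (⊤ : ℕ∞) (fun q => u q * px u q) := hu.mul (contDiff_px hu)
  have hp1 : Per (fun q => u q * pz u q) := hpu.mul (hpu.pz' hdu)
  have hp2 : Per (fun q => u q * px u q) := hpu.mul (hpu.px' hdu)
  have h1 := ibp_x ha hm1 hpa hp1
  have h2 := ibp_z ha hm2 hpa hp2
  -- rewrite px (u * pz u) etc. by product rule
  have e1 : (fun p => a p * px (fun q => u q * pz u q) p)
      = fun p => a p * (px u p * pz u p + u p * pz (px u) p) := by
    funext p
    rw [px_mul hdu ((contDiff_pz hu).differentiable (by simp)) p, clairaut hu p]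
  have e2 : (fun p => a p * pz (fun q => u q * px u q) p)
      = fun p => a p * (pz u p * px u p + u p * pz (px u) p) := by
    funext p
    rw [pz_mul hdu ((contDiff_px hu).differentiable (by simp)) p]
  rw [e1] at h1
  rw [e2] at h2
  have hsplit : (fun p => u p * Jac a u p)
      = fun p => px a p * (u p * pz u p) - pz a p * (u p * px u p) := by
    funext p; simp only [Jac]; ring
  rw [hsplit, MeasureTheory.integral_sub (f := fun p => px a p * (u p * pz u p))
    (g := fun p => pz a p * (u p * px u p))
    (integrableOn_unitSq ((contDiff_px ha).continuous.mul
      (hu.continuous.mul (contDiff_pz hu).continuous)))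
    (integrableOn_unitSq ((contDiff_pz ha).continuous.mul
      (hu.continuous.mul (contDiff_px hu).continuous))), h1, h2]
  have : (fun p => a p * (px u p * pz u p + u p * pz (px u) p))
      = fun p => a p * (pz u p * px u p + u p * pz (px u) p) := by
    funext p; ring
  rw [this]
  ring

/-- `∫ r J(r, u) = 0`. -/
lemma L_J2 {r u : ℝ × ℝ → ℝ} (hr : ContDiff ℝ (⊤ : ℕ∞) r) (hu : ContDiff ℝ (⊤ : ℕ∞) u)
    (hpr : Per r) (hpu : Per u) :
    ∫ p in unitSq, r p * Jac r u p = 0 := by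
  have hdr := hr.differentiable (by simp)
  have hdu := hu.differentiable (by simp)
  have hs : ContDiff ℝ (⊤ : ℕ∞) (fun q => r q * r q) := hr.mul hr
  have hps : Per (fun q => r q * r q) := hpr.mul hpr
  have h1 := ibp_x hs (contDiff_pz hu) hps (hpu.pz' hdu)
  have h2 := ibp_z hs (contDiff_px hu) hps (hpu.px' hdu)
  have e0x : (fun p => px (fun q => r q * r q) p * pz u p)
      = fun p => 2 * (r p * px r p * pz u p) := by
    funext p; rw [px_mul hdr hdr p]; ring
  have e0z : (fun p => pz (fun q => r q * r q) p * px u p)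
      = fun p => 2 * (r p * pz r p * px u p) := by
    funext p; rw [pz_mul hdr hdr p]; ring
  rw [e0x] at h1
  rw [e0z] at h2
  rw [MeasureTheory.integral_const_mul] at h1 h2
  have e3 : (fun p => r p * r p * px (pz u) p)
      = fun p => r p * r p * pz (px u) p := by
    funext p; rw [clairaut hu p]
  have hsplit : (fun p => r p * Jac r u p)
      = fun p => r p * px r p * pz u p - r p * pz r p * px u p := by
    funext p; simp only [Jac]; ring
  rw [hsplit, MeasureTheory.integral_sub (f := fun p => r p * px r p * pz u p)
    (g := fun p => r p * pz r p * px u p)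
    (integrableOn_unitSq ((hr.continuous.mul (contDiff_px hr).continuous).mul
      (contDiff_pz hu).continuous))
    (integrableOn_unitSq ((hr.continuous.mul (contDiff_pz hr).continuous).mul
      (contDiff_px hu).continuous))]
  have he : (∫ p in unitSq, (fun q => r q * r q) p * px (pz u) p)
      = ∫ p in unitSq, (fun q => r q * r q) p * pz (px u) p := by
    simp only [clairaut hu]
  linarith [h1, h2, he]

/-! ### Differentiation under the integral sign -/

lemma hasDerivAt_int {G G' : ℝ × (ℝ × ℝ) → ℝ}
    (hG : ∀ s p, HasDerivAt (fun s' => G (s', p)) (G' (s, p)) s)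
    (hGc : Continuous G) (hG'c : Continuous G') (t : ℝ) :
    HasDerivAt (fun s => ∫ p in unitSq, G (s, p)) (∫ p in unitSq, G' (t, p)) t := by
  have hK : IsCompact (Set.Icc (t - 1) (t + 1) ×ˢ unitSq) := isCompact_Icc.prod isCompact_unitSq
  obtain ⟨C, hC⟩ := hK.exists_bound_of_continuousOn hG'c.continuousOn
  have hmeas : MeasurableSet unitSq := isCompact_unitSq.isClosed.measurableSet
  have key := hasDerivAt_integral_of_dominated_loc_of_deriv_le
    (μ := volume.restrict unitSq) (x₀ := t) (s := Metric.ball t 1) (Metric.ball_mem_nhds t one_pos)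
    (F := fun s p => G (s, p)) (F' := fun s p => G' (s, p)) (bound := fun _ => C)
    (Filter.Eventually.of_forall fun s =>
      (hGc.comp (Continuous.prodMk_right s)).aestronglyMeasurable)
    (integrableOn_unitSq (hGc.comp (Continuous.prodMk_right t)))
    ((hG'c.comp (Continuous.prodMk_right t)).aestronglyMeasurable)
    (MeasureTheory.ae_restrict_of_forall_mem hmeas fun p hp s hs => by
      apply hC (s, p)
      refine ⟨?_, hp⟩
      rw [Metric.mem_ball, Real.dist_eq] at hs
      have := abs_sub_lt_iff.mp hs
      constructor <;> linarith [this.1, this.2])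
    (MeasureTheory.integrableOn_const isCompact_unitSq.measure_lt_top.ne)
    (Filter.Eventually.of_forall fun p s _ => hG s p)
  exact key.2

/-- Smoothness of a space slice. -/
lemma slice_contDiff {F : ℝ × (ℝ × ℝ) → ℝ} (hF : ContDiff ℝ (⊤ : ℕ∞) F) (s : ℝ) :
    ContDiff ℝ (⊤ : ℕ∞) (fun p => F (s, p)) :=
  hF.comp (contDiff_const.prodMk contDiff_id)

/-- The Laplacian of a space slice. -/
lemma bridge_lap {F : ℝ × (ℝ × ℝ) → ℝ} (hF : ContDiff ℝ (⊤ : ℕ∞) F) (s : ℝ) (p : ℝ × ℝ) :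
    lap (fun p' => F (s, p')) p
      = pdd ((0:ℝ), ((1:ℝ), (0:ℝ))) (pdd ((0:ℝ), ((1:ℝ), (0:ℝ))) F) (s, p)
        + pdd ((0:ℝ), ((0:ℝ), (1:ℝ))) (pdd ((0:ℝ), ((0:ℝ), (1:ℝ))) F) (s, p) := by
  have hdF : Differentiable ℝ F := hF.differentiable (by simp)
  have h1 : px (fun p' => F (s, p')) = fun p' => pdd ((0:ℝ), ((1:ℝ), (0:ℝ))) F (s, p') :=
    funext fun p' => bridge_px hdF s p'
  have h2 : pz (fun p' => F (s, p')) = fun p' => pdd ((0:ℝ), ((0:ℝ), (1:ℝ))) F (s, p') :=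
    funext fun p' => bridge_pz hdF s p'
  simp only [lap, h1, h2]
  rw [bridge_px ((pdd_contDiff hF _).differentiable (by simp)) s p,
    bridge_pz ((pdd_contDiff hF _).differentiable (by simp)) s p]

/-- Spatial periodicity of the time derivative (needs periodicity only for `s ≥ 0`). -/
lemma per_timederiv {F : ℝ × (ℝ × ℝ) → ℝ} (hF : ContDiff ℝ (⊤ : ℕ∞) F)
    (hper : ∀ s ≥ (0:ℝ), Per (fun p => F (s, p))) {t : ℝ} (ht : 0 ≤ t) :
    Per (fun p => pdd ((1:ℝ), ((0:ℝ), (0:ℝ))) F (t, p)) := by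
  have hdF : Differentiable ℝ F := hF.differentiable (by simp)
  have key : ∀ c : ℝ × ℝ, (∀ s ≥ (0:ℝ), ∀ q, F (s, q + c) = F (s, q)) →
      ∀ p : ℝ × ℝ, pdd ((1:ℝ), ((0:ℝ), (0:ℝ))) F (t, p + c)
        = pdd ((1:ℝ), ((0:ℝ), (0:ℝ))) F (t, p) := by
    intro c hc p
    set d := pdd ((1:ℝ), ((0:ℝ), (0:ℝ))) F (t, p + c) - pdd ((1:ℝ), ((0:ℝ), (0:ℝ))) F (t, p)
      with hd
    have hg : HasDerivAt (fun s => F (s, p + c) - F (s, p)) d t :=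
      (bridge_t hdF t (p + c)).sub (bridge_t hdF t p)
    have hzero : ∀ s ∈ Set.Ici (0:ℝ), F (s, p + c) - F (s, p) = 0 := fun s hs => by
      rw [hc s hs p, sub_self]
    have hu : UniqueDiffWithinAt ℝ (Set.Ici (0:ℝ)) t := uniqueDiffOn_Ici 0 t ht
    have h1 : HasDerivWithinAt (fun s => F (s, p + c) - F (s, p)) d (Set.Ici 0) t :=
      hg.hasDerivWithinAt
    have h2 : HasDerivWithinAt (fun s => F (s, p + c) - F (s, p)) 0 (Set.Ici 0) t :=
      (hasDerivWithinAt_const t _ (0:ℝ)).congr hzero (hzero t ht)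
    have := h1.derivWithin hu
    rw [h2.derivWithin hu] at this
    linarith [this]
  have h1 : ∀ s ≥ (0:ℝ), ∀ q : ℝ × ℝ, F (s, q + (1, 0)) = F (s, q) := by
    intro s hs q
    obtain ⟨x, z⟩ := q
    simpa using (hper s hs).1 x z
  have h2 : ∀ s ≥ (0:ℝ), ∀ q : ℝ × ℝ, F (s, q + (0, 1)) = F (s, q) := by
    intro s hs q
    obtain ⟨x, z⟩ := q
    simpa using (hper s hs).2 x z
  constructor
  · intro x z
    have := key (1, 0) h1 (x, z)
    simpa [Prod.ext_iff] using this
  · intro x z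
    have := key (0, 1) h2 (x, z)
    simpa [Prod.ext_iff] using this

/-! ### The two energy integrands -/

/-- Time derivative of a spacetime function. -/
noncomputable def tked (F : ℝ × (ℝ × ℝ) → ℝ) : ℝ × (ℝ × ℝ) → ℝ :=
  pdd ((1:ℝ), ((0:ℝ), (0:ℝ))) F

noncomputable def EG1 (F : ℝ × (ℝ × ℝ) → ℝ) : ℝ × (ℝ × ℝ) → ℝ :=
  fun q => (pdd ((0:ℝ), ((1:ℝ), (0:ℝ))) F q) ^ 2 + (pdd ((0:ℝ), ((0:ℝ), (1:ℝ))) F q) ^ 2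

noncomputable def EG1' (F : ℝ × (ℝ × ℝ) → ℝ) : ℝ × (ℝ × ℝ) → ℝ :=
  fun q => 2 * pdd ((0:ℝ), ((1:ℝ), (0:ℝ))) F q * pdd ((0:ℝ), ((1:ℝ), (0:ℝ))) (tked F) q
    + 2 * pdd ((0:ℝ), ((0:ℝ), (1:ℝ))) F q * pdd ((0:ℝ), ((0:ℝ), (1:ℝ))) (tked F) q

noncomputable def EG2 (F : ℝ × (ℝ × ℝ) → ℝ) : ℝ × (ℝ × ℝ) → ℝ := fun q => (F q) ^ 2

noncomputable def EG2' (F : ℝ × (ℝ × ℝ) → ℝ) : ℝ × (ℝ × ℝ) → ℝ :=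
  fun q => 2 * F q * tked F q

lemma hasDerivAt_EG1 {F : ℝ × (ℝ × ℝ) → ℝ} (hF : ContDiff ℝ (⊤ : ℕ∞) F) (s : ℝ) (p : ℝ × ℝ) :
    HasDerivAt (fun s' => EG1 F (s', p)) (EG1' F (s, p)) s := by
  have c1 : ContDiff ℝ (⊤ : ℕ∞) (pdd ((0:ℝ), ((1:ℝ), (0:ℝ))) F) := pdd_contDiff hF _
  have c2 : ContDiff ℝ (⊤ : ℕ∞) (pdd ((0:ℝ), ((0:ℝ), (1:ℝ))) F) := pdd_contDiff hF _
  have h1 := (bridge_t (c1.differentiable (by simp)) s p).pow 2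
  have h2 := (bridge_t (c2.differentiable (by simp)) s p).pow 2
  have h := h1.add h2
  have comm1 : pdd ((1:ℝ), ((0:ℝ), (0:ℝ))) (pdd ((0:ℝ), ((1:ℝ), (0:ℝ))) F) (s, p)
      = pdd ((0:ℝ), ((1:ℝ), (0:ℝ))) (tked F) (s, p) := pdd_comm hF _ _ _
  have comm2 : pdd ((1:ℝ), ((0:ℝ), (0:ℝ))) (pdd ((0:ℝ), ((0:ℝ), (1:ℝ))) F) (s, p)
      = pdd ((0:ℝ), ((0:ℝ), (1:ℝ))) (tked F) (s, p) := pdd_comm hF _ _ _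
  refine HasDerivAt.congr_deriv h ?_
  simp only [EG1']
  rw [← comm1, ← comm2]
  push_cast
  ring

lemma hasDerivAt_EG2 {F : ℝ × (ℝ × ℝ) → ℝ} (hF : ContDiff ℝ (⊤ : ℕ∞) F) (s : ℝ) (p : ℝ × ℝ) :
    HasDerivAt (fun s' => EG2 F (s', p)) (EG2' F (s, p)) s := by
  have h := (bridge_t (hF.differentiable (by simp)) s p).pow 2
  refine HasDerivAt.congr_deriv h ?_
  push_cast
  simp only [EG2', tked]
  ring

lemma continuous_EG1 {F : ℝ × (ℝ × ℝ) → ℝ} (hF : ContDiff ℝ (⊤ : ℕ∞) F) : Continuous (EG1 F) :=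
  (((pdd_contDiff hF _).continuous.pow 2).add ((pdd_contDiff hF _).continuous.pow 2))

lemma continuous_EG1' {F : ℝ × (ℝ × ℝ) → ℝ} (hF : ContDiff ℝ (⊤ : ℕ∞) F) : Continuous (EG1' F) := by
  have c := pdd_contDiff hF ((1:ℝ), ((0:ℝ), (0:ℝ)))
  exact ((continuous_const.mul (pdd_contDiff hF _).continuous).mul
      (pdd_contDiff c _).continuous).add
    ((continuous_const.mul (pdd_contDiff hF _).continuous).mul (pdd_contDiff c _).continuous)

lemma continuous_EG2 {F : ℝ × (ℝ × ℝ) → ℝ} (hF : ContDiff ℝ (⊤ : ℕ∞) F) : Continuous (EG2 F) :=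
  hF.continuous.pow 2

lemma continuous_EG2' {F : ℝ × (ℝ × ℝ) → ℝ} (hF : ContDiff ℝ (⊤ : ℕ∞) F) : Continuous (EG2' F) :=
  (continuous_const.mul hF.continuous).mul (pdd_contDiff hF _).continuous

lemma continuous_Jac {a b : ℝ × ℝ → ℝ} (ha : ContDiff ℝ (⊤ : ℕ∞) a) (hb : ContDiff ℝ (⊤ : ℕ∞) b) :
    Continuous (Jac a b) :=
  (((contDiff_px ha).continuous.mul (contDiff_pz hb).continuous).sub
    ((contDiff_pz ha).continuous.mul (contDiff_px hb).continuous))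

/-- A classical solution of the thermohaline circulation model with no wind
forcing: `ψ, ρ` are smooth (jointly in time and space), 1-periodic with zero
mean in the spatial variables at each time `t ≥ 0`, and satisfy
`Δψ_t + J(Δψ, ψ) = ρ_x + ν Δ²ψ` and `ρ_t + J(ρ, ψ) = −N² ψ_x + (ν/Pr) Δρ`
pointwise for `t ≥ 0`. -/
def IsSolution (ν Pr N2 : ℝ) (ψ ρ : ℝ → ℝ × ℝ → ℝ) : Prop :=
  ContDiff ℝ (⊤ : ℕ∞) (Function.uncurry ψ) ∧ ContDiff ℝ (⊤ : ℕ∞) (Function.uncurry ρ) ∧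
  (∀ t ≥ (0:ℝ), Per (ψ t) ∧ Per (ρ t) ∧
    (∫ p in unitSq, ψ t p) = 0 ∧ (∫ p in unitSq, ρ t p) = 0) ∧
  (∀ t ≥ (0:ℝ), ∀ p : ℝ × ℝ,
    deriv (fun s => lap (ψ s) p) t + Jac (lap (ψ t)) (ψ t) p
      = px (ρ t) p + ν * lap (lap (ψ t)) p) ∧
  (∀ t ≥ (0:ℝ), ∀ p : ℝ × ℝ,
    deriv (fun s => ρ s p) t + Jac (ρ t) (ψ t) p
      = -N2 * px (ψ t) p + (ν / Pr) * lap (ρ t) p)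

/-- `(1/2) d/dt (N² ‖∇ψ‖² + ‖ρ‖²) =
−ν (N² ‖Δψ‖² + (1/Pr) ‖∇ρ‖²)`. -/
theorem combined_energy_identity
    (ν Pr N2 : ℝ) (hν : 0 < ν) (hPr : 0 < Pr) (hN2 : 0 < N2)
    (ψ ρ : ℝ → ℝ × ℝ → ℝ) (hsol : IsSolution ν Pr N2 ψ ρ) :
    ∀ t ≥ (0:ℝ),
      HasDerivAt
        (fun s => (1/2) *
          (N2 * (∫ p in unitSq, ((px (ψ s) p) ^ 2 + (pz (ψ s) p) ^ 2)) +
            ∫ p in unitSq, (ρ s p) ^ 2))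
        (-(ν * (N2 * (∫ p in unitSq, (lap (ψ t) p) ^ 2) +
          (1 / Pr) * ∫ p in unitSq, ((px (ρ t) p) ^ 2 + (pz (ρ t) p) ^ 2)))) t := by
  intro t ht
  obtain ⟨hψ, hρ, hper, hPDE1, hPDE2⟩ := hsol
  have hdF : Differentiable ℝ (Function.uncurry ψ) := hψ.differentiable (by simp)
  have hdG : Differentiable ℝ (Function.uncurry ρ) := hρ.differentiable (by simp)
  have hpu : Per (ψ t) := (hper t ht).1
  have hpr : Per (ρ t) := (hper t ht).2.1
  have hu : ContDiff ℝ (⊤ : ℕ∞) (ψ t) := slice_contDiff hψ t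
  have hr : ContDiff ℝ (⊤ : ℕ∞) (ρ t) := slice_contDiff hρ t
  have hWsm : ContDiff ℝ (⊤ : ℕ∞) (tked (Function.uncurry ψ)) := pdd_contDiff hψ _
  have hdW : Differentiable ℝ (tked (Function.uncurry ψ)) := hWsm.differentiable (by simp)
  have hw : ContDiff ℝ (⊤ : ℕ∞) (fun p => tked (Function.uncurry ψ) (t, p)) := slice_contDiff hWsm t
  have hpw : Per (fun p => tked (Function.uncurry ψ) (t, p)) :=
    per_timederiv hψ (fun s hs => (hper s hs).1) ht
  -- bridges for the ψ-field
  have bxs : ∀ s p, px (ψ s) p = pdd ((0:ℝ), ((1:ℝ), (0:ℝ))) (Function.uncurry ψ) (s, p) :=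
    fun s p => bridge_px hdF s p
  have bzs : ∀ s p, pz (ψ s) p = pdd ((0:ℝ), ((0:ℝ), (1:ℝ))) (Function.uncurry ψ) (s, p) :=
    fun s p => bridge_pz hdF s p
  have bxW : ∀ p, px (fun p' => tked (Function.uncurry ψ) (t, p')) p
      = pdd ((0:ℝ), ((1:ℝ), (0:ℝ))) (tked (Function.uncurry ψ)) (t, p) :=
    fun p => bridge_px hdW t p
  have bzW : ∀ p, pz (fun p' => tked (Function.uncurry ψ) (t, p')) p
      = pdd ((0:ℝ), ((0:ℝ), (1:ℝ))) (tked (Function.uncurry ψ)) (t, p) :=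
    fun p => bridge_pz hdW t p
  -- pointwise PDE identity for `lap w`
  have hlapw : ∀ p, lap (fun p' => tked (Function.uncurry ψ) (t, p')) p
      = px (ρ t) p + ν * lap (lap (ψ t)) p - Jac (lap (ψ t)) (ψ t) p := by
    intro p
    have hder : HasDerivAt (fun s => lap (ψ s) p)
        (lap (fun p' => tked (Function.uncurry ψ) (t, p')) p) t := by
      have hfun : (fun s => lap (ψ s) p)
          = fun s => pdd ((0:ℝ), ((1:ℝ), (0:ℝ))) (pdd ((0:ℝ), ((1:ℝ), (0:ℝ)))
              (Function.uncurry ψ)) (s, p)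
            + pdd ((0:ℝ), ((0:ℝ), (1:ℝ))) (pdd ((0:ℝ), ((0:ℝ), (1:ℝ)))
              (Function.uncurry ψ)) (s, p) :=
        funext fun s => bridge_lap hψ s p
      rw [hfun]
      have h1 := bridge_t ((pdd_contDiff (pdd_contDiff hψ ((0:ℝ), ((1:ℝ), (0:ℝ))))
        ((0:ℝ), ((1:ℝ), (0:ℝ)))).differentiable (by simp)) t p
      have h2 := bridge_t ((pdd_contDiff (pdd_contDiff hψ ((0:ℝ), ((0:ℝ), (1:ℝ))))
        ((0:ℝ), ((0:ℝ), (1:ℝ)))).differentiable (by simp)) t p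
      refine HasDerivAt.congr_deriv (h1.add h2) ?_
      rw [bridge_lap hWsm t p]
      have c1 : pdd ((1:ℝ), ((0:ℝ), (0:ℝ))) (pdd ((0:ℝ), ((1:ℝ), (0:ℝ)))
          (pdd ((0:ℝ), ((1:ℝ), (0:ℝ))) (Function.uncurry ψ))) (t, p)
          = pdd ((0:ℝ), ((1:ℝ), (0:ℝ))) (pdd ((1:ℝ), ((0:ℝ), (0:ℝ)))
            (pdd ((0:ℝ), ((1:ℝ), (0:ℝ))) (Function.uncurry ψ))) (t, p) :=
        pdd_comm (pdd_contDiff hψ _) _ _ _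
      have c2 : pdd ((1:ℝ), ((0:ℝ), (0:ℝ))) (pdd ((0:ℝ), ((0:ℝ), (1:ℝ)))
          (pdd ((0:ℝ), ((0:ℝ), (1:ℝ))) (Function.uncurry ψ))) (t, p)
          = pdd ((0:ℝ), ((0:ℝ), (1:ℝ))) (pdd ((1:ℝ), ((0:ℝ), (0:ℝ)))
            (pdd ((0:ℝ), ((0:ℝ), (1:ℝ))) (Function.uncurry ψ))) (t, p) :=
        pdd_comm (pdd_contDiff hψ _) _ _ _
      have c1' : pdd ((1:ℝ), ((0:ℝ), (0:ℝ))) (pdd ((0:ℝ), ((1:ℝ), (0:ℝ)))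
          (Function.uncurry ψ))
          = pdd ((0:ℝ), ((1:ℝ), (0:ℝ))) (tked (Function.uncurry ψ)) :=
        funext fun q => pdd_comm hψ _ _ q
      have c2' : pdd ((1:ℝ), ((0:ℝ), (0:ℝ))) (pdd ((0:ℝ), ((0:ℝ), (1:ℝ)))
          (Function.uncurry ψ))
          = pdd ((0:ℝ), ((0:ℝ), (1:ℝ))) (tked (Function.uncurry ψ)) :=
        funext fun q => pdd_comm hψ _ _ q
      rw [c1, c2, c1', c2']
    have hp := hPDE1 t ht p
    rw [hder.deriv] at hp
    linarith
  -- pointwise PDE identity for the time derivative of ρ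
  have hRp : ∀ p, tked (Function.uncurry ρ) (t, p)
      = -(Jac (ρ t) (ψ t) p) - N2 * px (ψ t) p + (ν / Pr) * lap (ρ t) p := by
    intro p
    have hder : HasDerivAt (fun s => ρ s p) (tked (Function.uncurry ρ) (t, p)) t :=
      bridge_t hdG t p
    have hp := hPDE2 t ht p
    rw [hder.deriv] at hp
    linarith
  -- derivatives of the two integrals
  have hIA : HasDerivAt (fun s => ∫ p in unitSq, EG1 (Function.uncurry ψ) (s, p))
      (∫ p in unitSq, EG1' (Function.uncurry ψ) (t, p)) t :=
    hasDerivAt_int (hasDerivAt_EG1 hψ) (continuous_EG1 hψ) (continuous_EG1' hψ) t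
  have hIB : HasDerivAt (fun s => ∫ p in unitSq, EG2 (Function.uncurry ρ) (s, p))
      (∫ p in unitSq, EG2' (Function.uncurry ρ) (t, p)) t :=
    hasDerivAt_int (hasDerivAt_EG2 hρ) (continuous_EG2 hρ) (continuous_EG2' hρ) t
  have hD := ((hIA.const_mul N2).add hIB).const_mul (1/2 : ℝ)
  -- identify the goal function with the one in hD
  have hfunEq : (fun s => (1/2 : ℝ) *
        (N2 * (∫ p in unitSq, ((px (ψ s) p) ^ 2 + (pz (ψ s) p) ^ 2)) +
          ∫ p in unitSq, (ρ s p) ^ 2))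
      = fun s => (1/2 : ℝ) * (N2 * (∫ p in unitSq, EG1 (Function.uncurry ψ) (s, p))
          + ∫ p in unitSq, EG2 (Function.uncurry ρ) (s, p)) := by
    funext s
    have e1 : (∫ p in unitSq, ((px (ψ s) p) ^ 2 + (pz (ψ s) p) ^ 2))
        = ∫ p in unitSq, EG1 (Function.uncurry ψ) (s, p) := by
      congr 1; funext p; simp only [EG1, bxs, bzs]
    have e2 : (∫ p in unitSq, (ρ s p) ^ 2)
        = ∫ p in unitSq, EG2 (Function.uncurry ρ) (s, p) := rfl
    rw [e1, e2]
  rw [hfunEq]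
  refine HasDerivAt.congr_deriv hD ?_
  -- now the value computation
  have hcompA : (∫ p in unitSq, EG1' (Function.uncurry ψ) (t, p))
      = 2 * (∫ p in unitSq, ρ t p * px (ψ t) p)
        - 2 * ν * ∫ p in unitSq, (lap (ψ t) p) ^ 2 := by
    have s1 : (fun p => EG1' (Function.uncurry ψ) (t, p))
        = fun p => 2 * (px (ψ t) p * px (fun p' => tked (Function.uncurry ψ) (t, p')) p
            + pz (ψ t) p * pz (fun p' => tked (Function.uncurry ψ) (t, p')) p) := by
      funext p
      simp only [EG1', ← bxs, ← bzs, ← bxW, ← bzW]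
      ring
    rw [s1, MeasureTheory.integral_const_mul,
      L_grad hu hw hpu hpw]
    have s4 : (fun p => ψ t p * lap (fun p' => tked (Function.uncurry ψ) (t, p')) p)
        = fun p => ψ t p * px (ρ t) p + ν * (ψ t p * lap (lap (ψ t)) p)
            - ψ t p * Jac (lap (ψ t)) (ψ t) p := by
      funext p
      rw [hlapw p]
      ring
    have i1 : IntegrableOn (fun p => ψ t p * px (ρ t) p) unitSq :=
      integrableOn_unitSq (hu.continuous.mul (contDiff_px hr).continuous)
    have i2 : IntegrableOn (fun p => ν * (ψ t p * lap (lap (ψ t)) p)) unitSq :=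
      integrableOn_unitSq (continuous_const.mul
        (hu.continuous.mul (contDiff_lap (contDiff_lap hu)).continuous))
    have i3 : IntegrableOn (fun p => ψ t p * Jac (lap (ψ t)) (ψ t) p) unitSq :=
      integrableOn_unitSq (hu.continuous.mul (continuous_Jac (contDiff_lap hu) hu))
    have i12 : IntegrableOn
        (fun p => ψ t p * px (ρ t) p + ν * (ψ t p * lap (lap (ψ t)) p)) unitSq :=
      integrableOn_unitSq ((hu.continuous.mul (contDiff_px hr).continuous).add
        (continuous_const.mul (hu.continuous.mul (contDiff_lap (contDiff_lap hu)).continuous)))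
    rw [s4, MeasureTheory.integral_sub i12 i3, MeasureTheory.integral_add i1 i2,
      MeasureTheory.integral_const_mul]
    have h4a : (∫ p in unitSq, ψ t p * px (ρ t) p)
        = -∫ p in unitSq, ρ t p * px (ψ t) p := by
      have hibp := ibp_x hu hr hpu hpr
      have hc : (∫ p in unitSq, px (ψ t) p * ρ t p)
          = ∫ p in unitSq, ρ t p * px (ψ t) p := by
        congr 1; funext p; ring
      rw [hc] at hibp
      linarith
    have h4b : (∫ p in unitSq, ψ t p * lap (lap (ψ t)) p)
        = ∫ p in unitSq, (lap (ψ t) p) ^ 2 := by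
      rw [L_selfadj hu (contDiff_lap hu) hpu (hpu.lap' hu)]
      congr 1; funext p; ring
    have h4c := L_J1 (contDiff_lap hu) hu (hpu.lap' hu) hpu
    rw [h4a, h4b, h4c]
    ring
  have hcompB : (∫ p in unitSq, EG2' (Function.uncurry ρ) (t, p))
      = -(2 * N2) * (∫ p in unitSq, ρ t p * px (ψ t) p)
        - 2 * (ν / Pr) * ∫ p in unitSq, ((px (ρ t) p) ^ 2 + (pz (ρ t) p) ^ 2) := by
    have s1 : (fun p => EG2' (Function.uncurry ρ) (t, p))
        = fun p => 2 * (-(ρ t p * Jac (ρ t) (ψ t) p) - N2 * (ρ t p * px (ψ t) p)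
            + (ν / Pr) * (ρ t p * lap (ρ t) p)) := by
      funext p
      simp only [EG2']
      rw [hRp p]
      have : Function.uncurry ρ (t, p) = ρ t p := rfl
      rw [this]
      ring
    have i1 : IntegrableOn (fun p => -(ρ t p * Jac (ρ t) (ψ t) p)) unitSq :=
      (integrableOn_unitSq (hr.continuous.mul (continuous_Jac hr hu))).neg
    have i2 : IntegrableOn (fun p => N2 * (ρ t p * px (ψ t) p)) unitSq :=
      integrableOn_unitSq (continuous_const.mul
        (hr.continuous.mul (contDiff_px hu).continuous))
    have i3 : IntegrableOn (fun p => (ν / Pr) * (ρ t p * lap (ρ t) p)) unitSq :=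
      integrableOn_unitSq (continuous_const.mul
        (hr.continuous.mul (contDiff_lap hr).continuous))
    have i12 : IntegrableOn
        (fun p => -(ρ t p * Jac (ρ t) (ψ t) p) - N2 * (ρ t p * px (ψ t) p)) unitSq :=
      integrableOn_unitSq (((hr.continuous.mul (continuous_Jac hr hu)).neg).sub
        (continuous_const.mul (hr.continuous.mul (contDiff_px hu).continuous)))
    rw [s1, MeasureTheory.integral_const_mul,
      MeasureTheory.integral_add i12 i3, MeasureTheory.integral_sub i1 i2,
      MeasureTheory.integral_neg, MeasureTheory.integral_const_mul,
      MeasureTheory.integral_const_mul]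
    have hJ := L_J2 hr hu hpr hpu
    have hlr : (∫ p in unitSq, ρ t p * lap (ρ t) p)
        = -∫ p in unitSq, ((px (ρ t) p) ^ 2 + (pz (ρ t) p) ^ 2) := by
      have hg := L_grad hr hr hpr hpr
      have hc : (∫ p in unitSq, (px (ρ t) p * px (ρ t) p + pz (ρ t) p * pz (ρ t) p))
          = ∫ p in unitSq, ((px (ρ t) p) ^ 2 + (pz (ρ t) p) ^ 2) := by
        congr 1; funext p; ring
      rw [hc] at hg
      linarith
    rw [hJ, hlr]
    ring
  rw [hcompA, hcompB]
  field_simp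
  ring
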